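/- arXiv:2105.15095 — 8 statements merged into one kernel-verified Lean document; each statement's English description precedes it below -/
import Mathlib

section
/- Let h, A, J > 0 and let w ∈ ℝⁿ satisfy w_i ≥ 0 for all i and the discretized jerk constraints |w_{i−1} − 2w_i + w_{i+1}|·√((w_{i+1}+w_{i−1})/2) ≤ 2h²J for i = 2,…,n−1, and assume w_{i−1}+w_{i+1} > 0 for i = 2,…,n−1. Define η_i = (3(w_{i+1}+w_{i−1}) − 2w_i)/(4(w_{i+1}+w_{i−1})), θ_i = 1/2 + (√2·h²J/2)·(w_{i+1}+w_{i−1})^{−3/2}, and β_i = 1/2 − (√2·h²J/2)·(w_{i+1}+w_{i−1})^{−3/2}. Then for all i = 2,…,n−1: β_i ≤ η_i ≤ θ_i. Moreover η_i = θ_i holds if (w_{i−1} − 2w_i + w_{i+1})·√((w_{i+1}+w_{i−1})/2) = 2h²J, and η_i = β_i holds if (w_{i−1} − 2w_i + w_{i+1})·√((w_{i+1}+w_{i−1})/2) = −2h²J. -/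
/-- Comparison of the linearization coefficients: `β_i ≤ η_i ≤ θ_i`, with equality
`η_i = θ_i` (resp. `η_i = β_i`) when the corresponding discretized jerk constraint
is active. -/
theorem stmt_1 (n : ℕ) (hn : 3 ≤ n) (h A J : ℝ) (hh : 0 < h) (hA : 0 < A) (hJ : 0 < J)
    (w : ℕ → ℝ)
    (hw0 : ∀ i, 1 ≤ i → i ≤ n → 0 ≤ w i)
    (hjerk : ∀ i, 2 ≤ i → i ≤ n - 1 →
      |w (i - 1) - 2 * w i + w (i + 1)| * Real.sqrt ((w (i + 1) + w (i - 1)) / 2)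
        ≤ 2 * h ^ 2 * J)
    (hpos : ∀ i, 2 ≤ i → i ≤ n - 1 → 0 < w (i - 1) + w (i + 1)) :
    ∀ i, 2 ≤ i → i ≤ n - 1 →
      ((1 / 2 - Real.sqrt 2 * h ^ 2 * J / 2 * (w (i + 1) + w (i - 1)) ^ (-(3 : ℝ) / 2)
          ≤ (3 * (w (i + 1) + w (i - 1)) - 2 * w i) / (4 * (w (i + 1) + w (i - 1))))
      ∧ ((3 * (w (i + 1) + w (i - 1)) - 2 * w i) / (4 * (w (i + 1) + w (i - 1)))
          ≤ 1 / 2 + Real.sqrt 2 * h ^ 2 * J / 2 * (w (i + 1) + w (i - 1)) ^ (-(3 : ℝ) / 2)))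
      ∧ ((w (i - 1) - 2 * w i + w (i + 1)) * Real.sqrt ((w (i + 1) + w (i - 1)) / 2)
            = 2 * h ^ 2 * J →
          (3 * (w (i + 1) + w (i - 1)) - 2 * w i) / (4 * (w (i + 1) + w (i - 1)))
            = 1 / 2 + Real.sqrt 2 * h ^ 2 * J / 2 * (w (i + 1) + w (i - 1)) ^ (-(3 : ℝ) / 2))
      ∧ ((w (i - 1) - 2 * w i + w (i + 1)) * Real.sqrt ((w (i + 1) + w (i - 1)) / 2)
            = -(2 * h ^ 2 * J) →
          (3 * (w (i + 1) + w (i - 1)) - 2 * w i) / (4 * (w (i + 1) + w (i - 1)))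
            = 1 / 2 - Real.sqrt 2 * h ^ 2 * J / 2 * (w (i + 1) + w (i - 1)) ^ (-(3 : ℝ) / 2)) := by
  intro i h2 h3
  have hjerki := hjerk i h2 h3
  have hposi := hpos i h2 h3
  set s : ℝ := w (i + 1) + w (i - 1) with hs_def
  set d : ℝ := w (i - 1) - 2 * w i + w (i + 1) with hd_def
  have hs : 0 < s := by simp only [hs_def]; linarith
  have hsne : s ≠ 0 := ne_of_gt hs
  have hsq : 0 < Real.sqrt s := Real.sqrt_pos.mpr hs
  have hsqne : Real.sqrt s ≠ 0 := ne_of_gt hsq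
  have h2q : (0:ℝ) < Real.sqrt 2 := Real.sqrt_pos.mpr (by norm_num)
  have h2qne : Real.sqrt 2 ≠ 0 := ne_of_gt h2q
  have h2sq : Real.sqrt 2 * Real.sqrt 2 = 2 := Real.mul_self_sqrt (by norm_num)
  have hssq : Real.sqrt s * Real.sqrt s = s := Real.mul_self_sqrt hs.le
  have hsq2 : 0 < Real.sqrt (s / 2) := Real.sqrt_pos.mpr (by linarith)
  have hrpow : s ^ (-(3 : ℝ) / 2) = 1 / (s * Real.sqrt s) := by
    rw [show (-(3:ℝ)/2) = -(1 + 1/2) by norm_num, Real.rpow_neg hs.le,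
      Real.rpow_add hs, Real.rpow_one, ← Real.sqrt_eq_rpow]
    field_simp
  have hsqrt2 : Real.sqrt (s / 2) = Real.sqrt s / Real.sqrt 2 := Real.sqrt_div hs.le 2
  set T : ℝ := Real.sqrt 2 * h ^ 2 * J / 2 * s ^ (-(3 : ℝ) / 2) with hT_def
  -- key identity
  have hkey : T * (4 * s) * Real.sqrt (s / 2) = 2 * h ^ 2 * J := by
    rw [hT_def, hrpow, hsqrt2]
    field_simp
    nlinarith [sq_nonneg h, hJ.le]
  have heta : (3 * s - 2 * w i) / (4 * s) = 1 / 2 + d / (4 * s) := by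
    field_simp [hd_def, hs_def]
    ring
  -- inequalities
  have habs : |d| ≤ T * (4 * s) := by
    have := hjerki
    rw [← hkey] at this
    exact le_of_mul_le_mul_right this hsq2
  have habs' := abs_le.mp habs
  have hd4 : d / (4 * s) ≤ T := by
    rw [div_le_iff₀ (by linarith)]; linarith [habs'.2]
  have hd4' : -T ≤ d / (4 * s) := by
    rw [le_div_iff₀ (by linarith)]; linarith [habs'.1]
  refine ⟨⟨by rw [heta]; linarith, by rw [heta]; linarith⟩, ?_, ?_⟩
  · intro heq
    rw [← hkey] at heq
    have hdT : d = T * (4 * s) := mul_right_cancel₀ (ne_of_gt hsq2) heq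
    rw [heta, hdT]
    field_simp
  · intro heq
    rw [← hkey] at heq
    have hdT : d = -(T * (4 * s)) := by
      have : d * Real.sqrt (s/2) = (-(T * (4*s))) * Real.sqrt (s/2) := by linarith [heq]
      exact mul_right_cancel₀ (ne_of_gt hsq2) this
    rw [heta, hdT]
    field_simp
    ring
end

section
/- Let n ≥ 1, let M₁,…,Mₙ be finite index sets, and consider the polytope P = {x ∈ ℝⁿ : ℓⱼ ≤ xⱼ ≤ uⱼ for j = 1,…,n, and xⱼ ≤ a_{i,j}·x_{j−1} + b_{i,j}·x_{j+1} + c_{i,j} for all i ∈ Mⱼ, j = 1,…,n}, where all coefficients satisfy a_{i,j} ≥ 0, b_{i,j} ≥ 0, c_{i,j} ≥ 0, and a_{i,1} = 0 for i ∈ M₁ and b_{i,n} = 0 for i ∈ Mₙ (so that out-of-range variables do not occur). Assume P is nonempty, and define z ∈ ℝⁿ by zⱼ = max{xⱼ : x ∈ P}. Then z ∈ P; moreover, z is the componentwise maximum of P (z ≥ x for every x ∈ P), and for every function g : ℝⁿ → ℝ that is strictly decreasing with respect to the componentwise order (x ≤ y and x ≠ y implies g(x) > g(y)), z is the unique minimizer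 of g over P. -/
/-- Extension of a vector indexed by `Fin n` to integer indices, with value `0`
outside the range (out-of-range variables occur only with zero coefficients). -/
def extFn {n : ℕ} (x : Fin n → ℝ) : ℤ → ℝ :=
  fun k => if h : 0 ≤ k ∧ k < (n : ℤ) then x ⟨k.toNat, by omega⟩ else 0

/-- The special-structure polytope
`P = {x : ℓ ≤ x ≤ u, xⱼ ≤ a_{i,j}·x_{j−1} + b_{i,j}·x_{j+1} + c_{i,j} (i ∈ Mⱼ)}`. -/
def polyP (n : ℕ) (M : Fin n → Finset ℕ) (a b c : ℕ → Fin n → ℝ) (l u : Fin n → ℝ) :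
    Set (Fin n → ℝ) :=
  {x | (∀ j, l j ≤ x j ∧ x j ≤ u j) ∧
    ∀ j : Fin n, ∀ i ∈ M j,
      x j ≤ a i j * extFn x ((j : ℤ) - 1) + b i j * extFn x ((j : ℤ) + 1) + c i j}

/-- For the special-structure polytope with nonnegative coefficients, the
componentwise maximum `z` is itself feasible, dominates every feasible point, and is
the unique minimizer of every strictly componentwise-decreasing function. -/
theorem stmt_5 (n : ℕ) (hn : 1 ≤ n) (M : Fin n → Finset ℕ) (a b c : ℕ → Fin n → ℝ)
    (l u : Fin n → ℝ)
    (ha : ∀ j : Fin n, ∀ i ∈ M j, 0 ≤ a i j)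
    (hb : ∀ j : Fin n, ∀ i ∈ M j, 0 ≤ b i j)
    (hc : ∀ j : Fin n, ∀ i ∈ M j, 0 ≤ c i j)
    (ha1 : ∀ i ∈ M ⟨0, by omega⟩, a i ⟨0, by omega⟩ = 0)
    (hbn : ∀ i ∈ M ⟨n - 1, by omega⟩, b i ⟨n - 1, by omega⟩ = 0)
    (hne : (polyP n M a b c l u).Nonempty)
    (z : Fin n → ℝ)
    (hz : ∀ j, IsGreatest ((fun x => x j) '' polyP n M a b c l u) (z j)) :
    z ∈ polyP n M a b c l u
    ∧ (∀ x ∈ polyP n M a b c l u, x ≤ z)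
    ∧ ∀ g : (Fin n → ℝ) → ℝ, (∀ x y : Fin n → ℝ, x ≤ y → x ≠ y → g y < g x) →
        ∀ x ∈ polyP n M a b c l u, x ≠ z → g z < g x := by

  have hdom : ∀ x ∈ polyP n M a b c l u, ∀ j, x j ≤ z j := by
    intro x hx j
    exact (hz j).2 ⟨x, hx, rfl⟩
  have hext : ∀ x ∈ polyP n M a b c l u, ∀ k : ℤ, extFn x k ≤ extFn z k := by
    intro x hx k
    unfold extFn
    by_cases h : 0 ≤ k ∧ k < (n : ℤ)
    · simp only [dif_pos h]; exact hdom x hx _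
    · simp [h]
  have hzP : z ∈ polyP n M a b c l u := by
    constructor
    · intro j
      obtain ⟨w, hw, hwj⟩ := (hz j).1
      constructor
      · calc l j ≤ w j := (hw.1 j).1
          _ ≤ z j := hdom w hw j
      · rw [← hwj]; exact (hw.1 j).2
    · intro j i hi
      obtain ⟨w, hw, hwj⟩ := (hz j).1
      calc z j = w j := hwj.symm
        _ ≤ a i j * extFn w ((j : ℤ) - 1) + b i j * extFn w ((j : ℤ) + 1) + c i j :=
            hw.2 j i hi
        _ ≤ a i j * extFn z ((j : ℤ) - 1) + b i j * extFn z ((j : ℤ) + 1) + c i j := by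
            gcongr <;> [exact ha j i hi; exact hext w hw _; exact hb j i hi; exact hext w hw _]
  refine ⟨hzP, fun x hx => fun j => hdom x hx j, fun g hg x hx hxz => ?_⟩
  exact hg x z (fun j => hdom x hx j) hxz
end

section
/- Let h, A, J > 0 and set Δ = √2·h²J. Let w ∈ ℝⁿ with wᵢ ≥ 0 for all i and w_{i−1} + w_{i+1} > 0 for i = 2,…,n−1, and define b_{A,i} = 2hA − w_{i+1} + w_i, b_{D,i} = 2hA − w_i + w_{i+1}, b_{P,i} = Δ/√(w_{i+1}+w_{i−1}) − (w_{i−1} − 2w_i + w_{i+1})/2, b_{N,i} = Δ/√(w_{i+1}+w_{i−1}) + (w_{i−1} − 2w_i + w_{i+1})/2, θᵢ = 1/2 + (Δ/2)(w_{i+1}+w_{i−1})^{−3/2}, βᵢ = 1/2 − (Δ/2)(w_{i+1}+w_{i−1})^{−3/2}. Suppose δ ∈ ℝⁿ and y* ∈ ℝⁿ satisfy: (i) δ_{i+1} − δᵢ ≤ b_{A,i} and δᵢ − δ_{i+1} ≤ b_{D,i} for i = 1,…,n−1; (ii) δᵢ ≤ βᵢ(δ_{i−1} + δ_{i+1}) +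 b_{N,i} for i = 2,…,n−1; (iii) δ ≤ y* componentwise and θᵢ(y*_{i−1} + y*_{i+1}) − y*ᵢ ≤ b_{P,i} for i = 2,…,n−1; (iv) for each i ∈ {2,…,n−1} at least one of the following holds with equality: δᵢ = δ_{i+1} + b_{D,i}, δᵢ = δ_{i−1} + b_{A,i−1}, δᵢ = βᵢ(δ_{i−1} + δ_{i+1}) + b_{N,i}, or δᵢ = y*ᵢ; (v) δ_{i−1} + δ_{i+1} ≤ 2(w_{i−1} + w_{i+1}) for i = 2,…,n−1. Then the linearized PAR constraints hold: θᵢ(δ_{i−1} + δ_{i+1}) − δᵢ ≤ b_{P,i} for all i = 2,…,n−1. -/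
/-- Feasibility of the computed direction for the linearized PAR constraints: under
acceleration and linearized NAR constraints, domination by a PAR-feasible upper
bound `y*`, the activity condition, and the step-size assumption, the linearized PAR
constraints hold at `δ`. -/
theorem stmt_11 (n : ℕ) (hn : 3 ≤ n) (h A J : ℝ) (hh : 0 < h) (hA : 0 < A) (hJ : 0 < J)
    (Δ : ℝ) (hΔ : Δ = Real.sqrt 2 * h ^ 2 * J)
    (w δ ystar : ℕ → ℝ)
    (hw0 : ∀ i, 1 ≤ i → i ≤ n → 0 ≤ w i)
    (hwpos : ∀ i, 2 ≤ i → i ≤ n - 1 → 0 < w (i - 1) + w (i + 1))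
    (bA bD bP bN θ β : ℕ → ℝ)
    (hbA : ∀ i, bA i = 2 * h * A - w (i + 1) + w i)
    (hbD : ∀ i, bD i = 2 * h * A - w i + w (i + 1))
    (hbP : ∀ i, bP i = Δ / Real.sqrt (w (i + 1) + w (i - 1))
      - (w (i - 1) - 2 * w i + w (i + 1)) / 2)
    (hbN : ∀ i, bN i = Δ / Real.sqrt (w (i + 1) + w (i - 1))
      + (w (i - 1) - 2 * w i + w (i + 1)) / 2)
    (hθ : ∀ i, θ i = 1 / 2 + Δ / 2 * (w (i + 1) + w (i - 1)) ^ (-(3 : ℝ) / 2))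
    (hβ : ∀ i, β i = 1 / 2 - Δ / 2 * (w (i + 1) + w (i - 1)) ^ (-(3 : ℝ) / 2))
    (hyp1 : ∀ i, 1 ≤ i → i ≤ n - 1 → δ (i + 1) - δ i ≤ bA i ∧ δ i - δ (i + 1) ≤ bD i)
    (hyp2 : ∀ i, 2 ≤ i → i ≤ n - 1 → δ i ≤ β i * (δ (i - 1) + δ (i + 1)) + bN i)
    (hyp3a : ∀ i, 1 ≤ i → i ≤ n → δ i ≤ ystar i)
    (hyp3b : ∀ i, 2 ≤ i → i ≤ n - 1 →
      θ i * (ystar (i - 1) + ystar (i + 1)) - ystar i ≤ bP i)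
    (hyp4 : ∀ i, 2 ≤ i → i ≤ n - 1 →
      δ i = δ (i + 1) + bD i ∨ δ i = δ (i - 1) + bA (i - 1) ∨
        δ i = β i * (δ (i - 1) + δ (i + 1)) + bN i ∨ δ i = ystar i)
    (hyp5 : ∀ i, 2 ≤ i → i ≤ n - 1 →
      δ (i - 1) + δ (i + 1) ≤ 2 * (w (i - 1) + w (i + 1))) :
    ∀ i, 2 ≤ i → i ≤ n - 1 → θ i * (δ (i - 1) + δ (i + 1)) - δ i ≤ bP i := by
  intro i h2 hi
  have e : i - 1 + 1 = i := by omega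
  have hS : (0:ℝ) < w (i + 1) + w (i - 1) := by
    have := hwpos i h2 hi; linarith
  have hΔ0 : 0 ≤ Δ := by rw [hΔ]; positivity
  have hrS : (0:ℝ) ≤ (w (i + 1) + w (i - 1)) ^ (-(3:ℝ)/2) := Real.rpow_nonneg hS.le _
  have hc : 0 ≤ Δ / 2 * (w (i + 1) + w (i - 1)) ^ (-(3:ℝ)/2) :=
    mul_nonneg (by linarith) hrS
  have hkey : Δ / 2 * (w (i + 1) + w (i - 1)) ^ (-(3:ℝ)/2) * (2 * (w (i - 1) + w (i + 1)))
      = Δ / Real.sqrt (w (i + 1) + w (i - 1)) := by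
    have h1 : (w (i + 1) + w (i - 1)) ^ (-(3:ℝ)/2) * (w (i + 1) + w (i - 1))
        = (w (i + 1) + w (i - 1)) ^ (-(1:ℝ)/2) := by
      rw [← Real.rpow_add_one hS.ne']
      norm_num
    have h2' : (w (i + 1) + w (i - 1)) ^ (-(1:ℝ)/2)
        = (Real.sqrt (w (i + 1) + w (i - 1)))⁻¹ := by
      rw [Real.sqrt_eq_rpow, ← Real.rpow_neg hS.le]
      norm_num
    calc Δ / 2 * (w (i + 1) + w (i - 1)) ^ (-(3:ℝ)/2) * (2 * (w (i - 1) + w (i + 1)))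
        = Δ * ((w (i + 1) + w (i - 1)) ^ (-(3:ℝ)/2) * (w (i + 1) + w (i - 1))) := by ring
      _ = Δ * (Real.sqrt (w (i + 1) + w (i - 1)))⁻¹ := by rw [h1, h2']
      _ = Δ / Real.sqrt (w (i + 1) + w (i - 1)) := by rw [div_eq_mul_inv]
  have hθβ : θ i = 1 - β i := by rw [hθ, hβ]; ring
  have hθ0 : 0 ≤ θ i := by rw [hθ]; linarith
  have hN := hyp2 i h2 hi
  have hA1 := hyp1 i (by omega) hi
  have hA0 := hyp1 (i - 1) (by omega) (by omega)
  rw [e] at hA0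
  have hbNi := hbN i
  have hbPi := hbP i
  have hbDi := hbD i
  have hbDp := hbD (i - 1); rw [e] at hbDp
  have hbAi := hbA i
  have hbAp := hbA (i - 1); rw [e] at hbAp
  have hts : θ i * (δ (i - 1) + δ (i + 1))
      = (δ (i - 1) + δ (i + 1)) - β i * (δ (i - 1) + δ (i + 1)) := by
    rw [hθβ]; ring
  rcases hyp4 i h2 hi with hcase | hcase | hcase | hcase
  · -- deceleration active
    linarith [hA0.2]
  · -- acceleration active
    linarith [hA1.1]
  · -- NAR active
    have h5 := hyp5 i h2 hi
    have hmul : Δ / 2 * (w (i + 1) + w (i - 1)) ^ (-(3:ℝ)/2) * (δ (i - 1) + δ (i + 1))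
        ≤ Δ / 2 * (w (i + 1) + w (i - 1)) ^ (-(3:ℝ)/2) * (2 * (w (i - 1) + w (i + 1))) :=
      mul_le_mul_of_nonneg_left h5 hc
    have hd : θ i * (δ (i - 1) + δ (i + 1)) - β i * (δ (i - 1) + δ (i + 1))
        = 2 * (Δ / 2 * (w (i + 1) + w (i - 1)) ^ (-(3:ℝ)/2) * (δ (i - 1) + δ (i + 1))) := by
      rw [hθ, hβ]; ring
    linarith
  · -- upper bound active
    have h3b := hyp3b i h2 hi
    have h3m := hyp3a (i - 1) (by omega) (by omega)
    have h3p := hyp3a (i + 1) (by omega) (by omega)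
    have hmul : θ i * (δ (i - 1) + δ (i + 1)) ≤ θ i * (ystar (i - 1) + ystar (i + 1)) :=
      mul_le_mul_of_nonneg_left (add_le_add h3m h3p) hθ0
    linarith
end

section
/- Let Ω ⊂ ℝⁿ be a nonempty compact convex set and f : Ω → ℝ be continuous and strictly convex. Let (w_k) be a sequence in Ω such that for every k: f(w_{k+1}) ≤ f((w_k + w_{k+1})/2) and f(w_{k+1}) ≤ f(w_k). Then ‖w_{k+1} − w_k‖ → 0 as k → ∞. -/
set_option maxHeartbeats 1000000


/-- If a sequence in a compact convex set satisfies
`f(w_{k+1}) ≤ f((w_k + w_{k+1})/2)` and `f(w_{k+1}) ≤ f(w_k)` for a continuous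
strictly convex `f`, then consecutive differences tend to zero. -/
theorem stmt_13 (n : ℕ) (Ω : Set (EuclideanSpace ℝ (Fin n)))
    (hne : Ω.Nonempty) (hcomp : IsCompact Ω) (hconv : Convex ℝ Ω)
    (f : EuclideanSpace ℝ (Fin n) → ℝ)
    (hcont : ContinuousOn f Ω) (hstrict : StrictConvexOn ℝ Ω f)
    (w : ℕ → EuclideanSpace ℝ (Fin n)) (hw : ∀ k, w k ∈ Ω)
    (hmid : ∀ k, f (w (k + 1)) ≤ f ((2 : ℝ)⁻¹ • (w k + w (k + 1))))
    (hdec : ∀ k, f (w (k + 1)) ≤ f (w k)) :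
    Filter.Tendsto (fun k => ‖w (k + 1) - w k‖) Filter.atTop (nhds 0) := by
  obtain ⟨m0, hm0Ω, hm0⟩ := hcomp.exists_isMinOn hne hcont
  have hbdd : BddBelow (Set.range fun k => f (w k)) :=
    ⟨f m0, by rintro _ ⟨k, rfl⟩; exact hm0 (hw k)⟩
  have hanti : Antitone fun k => f (w k) := antitone_nat_of_succ_le hdec
  set L := ⨅ k, f (w k) with hLdef
  have hLtend : Filter.Tendsto (fun k => f (w k)) Filter.atTop (nhds L) :=
    tendsto_atTop_ciInf hanti hbdd
  have hLle : ∀ k, L ≤ f (w k) := fun k => ciInf_le hbdd k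
  by_contra hcon
  rw [Metric.tendsto_atTop] at hcon
  push_neg at hcon
  obtain ⟨ε, hε, hfreq⟩ := hcon
  have hfreq' : ∃ᶠ k in Filter.atTop, ε ≤ ‖w (k + 1) - w k‖ := by
    rw [Filter.frequently_atTop]
    intro N
    obtain ⟨k, hk, hdist⟩ := hfreq N
    refine ⟨k, hk, ?_⟩
    rwa [Real.dist_eq, sub_zero, abs_norm] at hdist
  obtain ⟨φ, hφ, hφε⟩ := Filter.extraction_of_frequently_atTop hfreq'
  obtain ⟨x, hxΩ, ψ, hψ, hxlim⟩ := hcomp.tendsto_subseq (fun k => hw (φ k))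
  obtain ⟨y, hyΩ, χ, hχ, hylim⟩ :=
    hcomp.tendsto_subseq (x := fun k => w (φ (ψ k) + 1)) (fun k => hw _)
  set σ : ℕ → ℕ := fun k => φ (ψ (χ k)) with hσ
  have hσmono : StrictMono σ := hφ.comp (hψ.comp hχ)
  have hxlim' : Filter.Tendsto (fun k => w (σ k)) Filter.atTop (nhds x) :=
    hxlim.comp hχ.tendsto_atTop
  have hylim' : Filter.Tendsto (fun k => w (σ k + 1)) Filter.atTop (nhds y) := hylim
  have hεxy : ε ≤ ‖y - x‖ := by
    have hnorm : Filter.Tendsto (fun k => ‖w (σ k + 1) - w (σ k)‖) Filter.atTop (nhds ‖y - x‖) :=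
      (hylim'.sub hxlim').norm
    exact le_of_tendsto_of_tendsto tendsto_const_nhds hnorm
      (Filter.Eventually.of_forall fun k => hφε (ψ (χ k)))
  have hxy : x ≠ y := by
    intro h; rw [h, sub_self, norm_zero] at hεxy; linarith
  have hcontAt : ∀ z ∈ Ω, ∀ u : ℕ → EuclideanSpace ℝ (Fin n), (∀ k, u k ∈ Ω) →
      Filter.Tendsto u Filter.atTop (nhds z) →
      Filter.Tendsto (fun k => f (u k)) Filter.atTop (nhds (f z)) := by
    intro z hz u hu hlim
    exact (hcont z hz).tendsto.comp
      (tendsto_nhdsWithin_iff.2 ⟨hlim, Filter.Eventually.of_forall hu⟩)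
  have hfx : f x = L :=
    tendsto_nhds_unique (hcontAt x hxΩ _ (fun k => hw _) hxlim')
      (hLtend.comp hσmono.tendsto_atTop)
  have hfy : f y = L :=
    tendsto_nhds_unique (hcontAt y hyΩ _ (fun k => hw _) hylim')
      (hLtend.comp ((StrictMono.tendsto_atTop (fun a b h => Nat.add_lt_add_right (hσmono h) 1 : StrictMono fun k => σ k + 1))))
  have hmeq : ∀ a b : EuclideanSpace ℝ (Fin n),
      (2 : ℝ)⁻¹ • (a + b) = (1/2 : ℝ) • a + (1/2 : ℝ) • b := by
    intro a b; rw [smul_add]; norm_num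
  have hmΩ : (2 : ℝ)⁻¹ • (x + y) ∈ Ω := by
    rw [hmeq]
    exact hconv hxΩ hyΩ (by norm_num) (by norm_num) (by norm_num)
  have hmidlim : Filter.Tendsto (fun k => f ((2 : ℝ)⁻¹ • (w (σ k) + w (σ k + 1))))
      Filter.atTop (nhds (f ((2 : ℝ)⁻¹ • (x + y)))) := by
    apply hcontAt _ hmΩ
    · intro k
      rw [hmeq]
      exact hconv (hw _) (hw _) (by norm_num) (by norm_num) (by norm_num)
    · exact (hxlim'.add hylim').const_smul _
  have hLlemid : L ≤ f ((2 : ℝ)⁻¹ • (x + y)) :=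
    ge_of_tendsto hmidlim
      (Filter.Eventually.of_forall fun k => le_trans (hLle _) (hmid (σ k)))
  have hlt : f ((2 : ℝ)⁻¹ • (x + y)) < L := by
    have := hstrict.2 hxΩ hyΩ hxy (by norm_num : (0:ℝ) < 1/2)
      (by norm_num : (0:ℝ) < 1/2) (by norm_num)
    rw [hmeq]
    calc f ((1/2 : ℝ) • x + (1/2 : ℝ) • y) < (1/2 : ℝ) * f x + (1/2 : ℝ) * f y := this
    _ = L := by rw [hfx, hfy]; ring
  linarith
end

section
/- Let f : ℝⁿ → ℝ and c : ℝⁿ → ℝᵐ be continuously differentiable. Suppose (w_k) ⊂ ℝⁿ, (δ_k) ⊂ ℝⁿ and (μ_k) ⊂ ℝᵐ are sequences with w_k → w̄, δ_k → 0, μ_k → μ̄, such that for every k: μ_k ≥ 0, ∇f(w_k + δ_k) + Dc(w_k)ᵀμ_k = 0, c(w_k) + Dc(w_k)·δ_k ≤ 0, and μ_kᵀ(c(w_k) + Dc(w_k)·δ_k) = 0, where Dc denotes the Jacobian of c. Then w̄ is a KKT point of the problem min{f(x) : c(x) ≤ 0} with multiplier μ̄: ∇f(w̄) + Dc(w̄)ᵀμ̄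 = 0, c(w̄) ≤ 0, μ̄ ≥ 0, and μ̄ᵀc(w̄) = 0. -/
/-!
Each of the four KKT conditions of the linearized subproblem at step `k` says that a continuous
function of `(w_k, δ_k, μ_k)` lies in a closed set (`{0}`, `(-∞, 0]` or `[0, ∞)`); continuity of
`f`, `c` and of their derivatives is exactly what makes these functions continuous. Hence the
conditions persist at the limit `(w̄, 0, μ̄)`, where the linearization `c(w) + Dc(w)δ` reduces
to `c(w̄)`.
-/

open Filter Topology

theorem IsClosed.apply_mem_of_tendsto {X Y α : Type*} [TopologicalSpace X] [TopologicalSpace Y]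
    {s : Set Y} (hs : IsClosed s) {Φ : X → Y} (hΦ : Continuous Φ) {l : Filter α} [l.NeBot]
    {p : α → X} {a : X} (hp : Tendsto p l (𝓝 a)) (h : ∀ᶠ k in l, Φ (p k) ∈ s) : Φ a ∈ s :=
  hs.mem_of_tendsto ((hΦ.tendsto a).comp hp) h

section

variable {E ι : Type*} [NormedAddCommGroup E] [NormedSpace ℝ E] [Fintype ι]

theorem ContDiff.continuous_linearization {F : Type*} [NormedAddCommGroup F] [NormedSpace ℝ F]
    {g : E → F} (hg : ContDiff ℝ 1 g) :
    Continuous fun p : E × E => g p.1 + fderiv ℝ g p.1 p.2 := by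
  have := hg.continuous_fderiv one_ne_zero
  have := hg.continuous
  fun_prop

theorem continuous_shifted_lagrangian_fderiv_apply {f : E → ℝ} {c : ι → E → ℝ}
    (hf : ContDiff ℝ 1 f) (hc : ∀ j, ContDiff ℝ 1 (c j)) (d : E) :
    Continuous fun p : E × E × (ι → ℝ) =>
      fderiv ℝ f (p.1 + p.2.1) d + ∑ j, p.2.2 j * fderiv ℝ (c j) p.1 d := by
  have := hf.continuous_fderiv one_ne_zero
  have := fun j => (hc j).continuous_fderiv one_ne_zero
  fun_prop

theorem continuous_sum_mul_linearization {c : ι → E → ℝ} (hc : ∀ j, ContDiff ℝ 1 (c j)) :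
    Continuous fun p : E × E × (ι → ℝ) =>
      ∑ j, p.2.2 j * (c j p.1 + fderiv ℝ (c j) p.1 p.2.1) := by
  have := fun j => (hc j).continuous_linearization
  fun_prop

end

/-- Passing the KKT systems of the convex subproblems to the limit: if the iterates
`w_k` converge to `w̄`, the steps `δ_k` tend to `0`, the multipliers `μ_k` converge
to `μ̄`, and at every `k` the KKT conditions of the linearized subproblem hold, then
`w̄` is a KKT point of `min{f(x) : c(x) ≤ 0}` with multiplier `μ̄`. -/
theorem stmt_14 (n m : ℕ)
    (f : (Fin n → ℝ) → ℝ) (c : Fin m → (Fin n → ℝ) → ℝ)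
    (hf : ContDiff ℝ 1 f) (hc : ∀ j, ContDiff ℝ 1 (c j))
    (w δ : ℕ → (Fin n → ℝ)) (μ : ℕ → (Fin m → ℝ))
    (wbar : Fin n → ℝ) (μbar : Fin m → ℝ)
    (hwconv : Filter.Tendsto w Filter.atTop (nhds wbar))
    (hδconv : Filter.Tendsto δ Filter.atTop (nhds 0))
    (hμconv : Filter.Tendsto μ Filter.atTop (nhds μbar))
    (hμpos : ∀ k, ∀ j, 0 ≤ μ k j)
    (hstat : ∀ k, ∀ d : Fin n → ℝ,
      fderiv ℝ f (w k + δ k) d + ∑ j, μ k j * fderiv ℝ (c j) (w k) d = 0)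
    (hfeas : ∀ k, ∀ j, c j (w k) + fderiv ℝ (c j) (w k) (δ k) ≤ 0)
    (hcomp : ∀ k, ∑ j, μ k j * (c j (w k) + fderiv ℝ (c j) (w k) (δ k)) = 0) :
    (∀ d : Fin n → ℝ,
      fderiv ℝ f wbar d + ∑ j, μbar j * fderiv ℝ (c j) wbar d = 0)
    ∧ (∀ j, c j wbar ≤ 0)
    ∧ (∀ j, 0 ≤ μbar j)
    ∧ ∑ j, μbar j * c j wbar = 0 := by
  have hp : Tendsto (fun k => (w k, δ k, μ k)) atTop (𝓝 (wbar, 0, μbar)) :=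
    hwconv.prodMk_nhds (hδconv.prodMk_nhds hμconv)
  refine ⟨fun d => ?stationarity, fun j => ?primal, fun j => ?dual, ?complementarity⟩
  case stationarity =>
    simpa using isClosed_singleton.apply_mem_of_tendsto
      (continuous_shifted_lagrangian_fderiv_apply hf hc d) hp (.of_forall fun k => hstat k d)
  case primal =>
    simpa using isClosed_Iic.apply_mem_of_tendsto
      ((hc j).continuous_linearization.comp (continuous_fst.prodMk continuous_snd.fst)) hp
      (.of_forall fun k => hfeas k j)
  case dual =>
    simpa using isClosed_Ici.apply_mem_of_tendsto
      ((continuous_apply j).comp continuous_snd.snd) hp (.of_forall fun k => hμpos k j)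
  case complementarity =>
    simpa using isClosed_singleton.apply_mem_of_tendsto
      (continuous_sum_mul_linearization hc) hp (.of_forall hcomp)
end

section
/- Let n ≥ 2 and h > 0, and define f on the open positive orthant {w ∈ ℝⁿ : wᵢ > 0 for all i} by f(w) = Σ_{i=1}^{n−1} 2h/(√(w_{i+1}) + √(wᵢ)). Then f is strictly convex on the open positive orthant, and f is strictly decreasing with respect to the componentwise order there: if 0 < w ≤ w′ componentwise and w ≠ w′, then f(w) > f(w′). -/
/-!
Each summand is `c / (√a + √b)` evaluated at a pair of adjacent coordinates. On the open
quadrant, `(a, b) ↦ √a + √b` is positive, strictly concave and strictly increasing, and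
`x ↦ c / x` is convex and strictly decreasing on `(0, ∞)`, so every summand is strictly convex
and strictly decreasing as a function of its pair. Summing over all adjacent pairs gives the
claims, because for `n ≥ 2` every coordinate occurs in some pair: two distinct points of the
orthant differ in at least one pair.
-/

open Set Function

section SumComp

variable {𝕜 E F β ι : Type*} [Fintype ι]

theorem StrictConvexOn.sum_comp_linearMap [Field 𝕜] [LinearOrder 𝕜] [IsStrictOrderedRing 𝕜]
    [AddCommGroup E] [Module 𝕜 E] [AddCommGroup F] [Module 𝕜 F]
    [AddCommMonoid β] [PartialOrder β] [IsOrderedCancelAddMonoid β] [Module 𝕜 β]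
    {φ : F → β} {s : Set E} {t : Set F} (hφ : StrictConvexOn 𝕜 t φ) (hs : Convex 𝕜 s)
    (L : ι → E →ₗ[𝕜] F) (hL : ∀ i, MapsTo (L i) s t) (hinj : InjOn (fun x i ↦ L i x) s) :
    StrictConvexOn 𝕜 s fun x ↦ ∑ i, φ (L i x) := by
  refine ⟨hs, fun x hx y hy hxy a b ha hb hab ↦ ?_⟩
  obtain ⟨j, hj⟩ : ∃ j, L j x ≠ L j y := by
    by_contra! h
    exact hxy (hinj hx hy (funext h))
  calc ∑ i, φ (L i (a • x + b • y))
      < ∑ i, (a • φ (L i x) + b • φ (L i y)) := by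
        simp only [map_add, map_smul]
        refine Finset.sum_lt_sum (fun i _ ↦ ?_) ⟨j, Finset.mem_univ j, ?_⟩
        · exact hφ.convexOn.2 (hL i hx) (hL i hy) ha.le hb.le hab
        · exact hφ.2 (hL j hx) (hL j hy) hj ha hb hab
    _ = a • ∑ i, φ (L i x) + b • ∑ i, φ (L i y) := by
        rw [Finset.sum_add_distrib, Finset.smul_sum, Finset.smul_sum]

theorem StrictAntiOn.sum_comp [Preorder E] [PartialOrder F]
    [AddCommMonoid β] [PartialOrder β] [IsOrderedCancelAddMonoid β]
    {φ : F → β} {s : Set E} {t : Set F} (hφ : StrictAntiOn φ t)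
    (L : ι → E → F) (hmono : ∀ i, Monotone (L i)) (hL : ∀ i, MapsTo (L i) s t)
    (hinj : InjOn (fun x i ↦ L i x) s) :
    StrictAntiOn (fun x ↦ ∑ i, φ (L i x)) s := by
  intro x hx y hy hxy
  obtain ⟨j, hj⟩ : ∃ j, L j x ≠ L j y := by
    by_contra! h
    exact hxy.ne (hinj hx hy (funext h))
  refine Finset.sum_lt_sum (fun i _ ↦ ?_) ⟨j, Finset.mem_univ j, ?_⟩
  · exact hφ.antitoneOn (hL i hx) (hL i hy) (hmono i hxy.le)
  · exact hφ (hL j hx) (hL j hy) ((hmono j hxy.le).lt_of_ne hj)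

end SumComp

theorem ConvexOn.comp_strictConcaveOn_of_mapsTo {𝕜 E β : Type*} [Field 𝕜] [LinearOrder 𝕜]
    [IsStrictOrderedRing 𝕜] [AddCommGroup E] [Module 𝕜 E]
    [AddCommMonoid β] [PartialOrder β] [Module 𝕜 β] {s : Set E} {t : Set 𝕜} {g : 𝕜 → β} {u : E → 𝕜} (hg : ConvexOn 𝕜 t g) (hu : StrictConcaveOn 𝕜 s u)
    (hg' : StrictAntiOn g t) (hst : MapsTo u s t) : StrictConvexOn 𝕜 s (g ∘ u) :=
  ⟨hu.1, fun _ hx _ hy hxy _ _ ha hb hab ↦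
    (hg' (hg.1 (hst hx) (hst hy) ha.le hb.le hab) (hst (hu.1 hx hy ha.le hb.le hab))
      (hu.2 hx hy hxy ha hb hab)).trans_le (hg.2 (hst hx) (hst hy) ha.le hb.le hab)⟩

theorem StrictConcaveOn.prod_add {𝕜 E F β : Type*} [Field 𝕜] [LinearOrder 𝕜]
    [IsStrictOrderedRing 𝕜] [AddCommGroup E] [Module 𝕜 E] [AddCommGroup F] [Module 𝕜 F]
    [AddCommMonoid β] [PartialOrder β] [IsOrderedCancelAddMonoid β] [Module 𝕜 β]
    {s : Set E} {t : Set F} {f : E → β} {g : F → β}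
    (hf : StrictConcaveOn 𝕜 s f) (hg : StrictConcaveOn 𝕜 t g) :
    StrictConcaveOn 𝕜 (s ×ˢ t) fun p ↦ f p.1 + g p.2 := by
  refine ⟨hf.1.prod hg.1, fun p hp q hq hpq a b ha hb hab ↦ ?_⟩
  simp only [Prod.fst_add, Prod.snd_add, Prod.smul_fst, Prod.smul_snd, smul_add]
  have hf' := hf.concaveOn.2 hp.1 hq.1 ha.le hb.le hab
  have hg' := hg.concaveOn.2 hp.2 hq.2 ha.le hb.le hab
  rcases eq_or_ne p.1 q.1 with h1 | h1
  · have h2 : p.2 ≠ q.2 := fun h2 ↦ hpq (Prod.ext h1 h2)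
    calc _ = a • f p.1 + b • f q.1 + (a • g p.2 + b • g q.2) := by abel
      _ < _ := add_lt_add_of_le_of_lt hf' (hg.2 hp.2 hq.2 h2 ha hb hab)
  · calc _ = a • f p.1 + b • f q.1 + (a • g p.2 + b • g q.2) := by abel
      _ < _ := add_lt_add_of_lt_of_le (hf.2 hp.1 hq.1 h1 ha hb hab) hg'

open Real

theorem strictConvexOn_div_sqrt_add_sqrt {c : ℝ} (hc : 0 < c) :
    StrictConvexOn ℝ (Ioi 0 ×ˢ Ioi 0) fun p : ℝ × ℝ ↦ c / (√p.1 + √p.2) := by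
  have hsqrt : StrictConcaveOn ℝ (Ioi 0) (√·) :=
    strictConcaveOn_sqrt.subset Ioi_subset_Ici_self (convex_Ioi 0)
  have hdiv : ConvexOn ℝ (Ioi 0) fun x : ℝ ↦ c / x := by
    simpa only [smul_eq_mul, zpow_neg_one, div_eq_mul_inv] using (convexOn_zpow (-1)).smul hc.le
  refine hdiv.comp_strictConcaveOn_of_mapsTo (hsqrt.prod_add hsqrt)
    (fun x hx y _ hxy ↦ div_lt_div_of_pos_left hc hx hxy) ?_
  exact fun p hp ↦ add_pos (sqrt_pos.2 hp.1) (sqrt_pos.2 hp.2)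

theorem strictAntiOn_div_sqrt_add_sqrt {c : ℝ} (hc : 0 < c) :
    StrictAntiOn (fun p : ℝ × ℝ ↦ c / (√p.1 + √p.2)) (Ioi 0 ×ˢ Ioi 0) := by
  intro p hp q hq hpq
  have hsum : √p.1 + √p.2 < √q.1 + √q.2 := by
    rcases Prod.lt_iff.1 hpq with ⟨h1, h2⟩ | ⟨h1, h2⟩
    · exact add_lt_add_of_lt_of_le (sqrt_lt_sqrt hp.1.le h1) (sqrt_le_sqrt h2)
    · exact add_lt_add_of_le_of_lt (sqrt_le_sqrt h1) (sqrt_lt_sqrt hp.2.le h2)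
  exact div_lt_div_of_pos_left hc (add_pos (sqrt_pos.2 hp.1) (sqrt_pos.2 hp.2)) hsum

section AdjacentPair

variable {R : Type*} [Semiring R] {n : ℕ}

def adjacentPair (i : Fin (n - 1)) : (Fin n → R) →ₗ[R] R × R :=
  (LinearMap.proj ⟨i + 1, by omega⟩).prod (LinearMap.proj ⟨i, by omega⟩)

theorem adjacentPair_apply (i : Fin (n - 1)) (w : Fin n → R) :
    adjacentPair i w = (w ⟨i + 1, by omega⟩, w ⟨i, by omega⟩) := rfl

theorem monotone_adjacentPair [Preorder R] (i : Fin (n - 1)) :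
    Monotone (adjacentPair (R := R) i) :=
  fun _ _ hvw ↦ ⟨hvw _, hvw _⟩

theorem injective_adjacentPair (hn : 2 ≤ n) :
    Injective fun (w : Fin n → R) (i : Fin (n - 1)) ↦ adjacentPair i w := by
  intro v w hvw
  funext j
  by_cases hj : (j : ℕ) < n - 1
  · exact congrArg Prod.snd (congrFun hvw ⟨j, hj⟩)
  · have hlast : (⟨n - 2 + 1, by omega⟩ : Fin n) = j := Fin.ext (by simp only; omega)
    simpa only [adjacentPair_apply, hlast] using congrArg Prod.fst (congrFun hvw ⟨n - 2, by omega⟩)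

end AdjacentPair

/-- The discretized travel-time objective
`f(w) = Σ_{i=1}^{n−1} 2h/(√w_{i+1} + √w_i)` is strictly convex and strictly
componentwise-decreasing on the open positive orthant. -/
theorem stmt_15 (n : ℕ) (hn : 2 ≤ n) (h : ℝ) (hh : 0 < h) :
    StrictConvexOn ℝ {w : Fin n → ℝ | ∀ i, 0 < w i}
      (fun w => ∑ i : Fin (n - 1),
        2 * h / (Real.sqrt (w ⟨(i : ℕ) + 1, by omega⟩) + Real.sqrt (w ⟨(i : ℕ), by omega⟩)))
    ∧ ∀ w w' : Fin n → ℝ, (∀ i, 0 < w i) → (∀ i, 0 < w' i) → w ≤ w' → w ≠ w' →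
        (∑ i : Fin (n - 1),
          2 * h / (Real.sqrt (w' ⟨(i : ℕ) + 1, by omega⟩) + Real.sqrt (w' ⟨(i : ℕ), by omega⟩)))
        < ∑ i : Fin (n - 1),
          2 * h / (Real.sqrt (w ⟨(i : ℕ) + 1, by omega⟩) + Real.sqrt (w ⟨(i : ℕ), by omega⟩)) := by
  have hc : 0 < 2 * h := by positivity
  have hmaps (i : Fin (n - 1)) :
      MapsTo (adjacentPair i) {w : Fin n → ℝ | ∀ i, 0 < w i} (Ioi 0 ×ˢ Ioi 0) :=
    fun _ hw ↦ ⟨hw _, hw _⟩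
  have hconvex : Convex ℝ {w : Fin n → ℝ | ∀ i, 0 < w i} := by
    simpa only [Set.pi, mem_univ, true_implies, mem_Ioi] using
      convex_pi (s := univ) fun (_ : Fin n) _ ↦ convex_Ioi (0 : ℝ)
  refine ⟨(strictConvexOn_div_sqrt_add_sqrt hc).sum_comp_linearMap hconvex adjacentPair hmaps
    (injective_adjacentPair hn).injOn, fun w w' hw hw' hle hne ↦ ?_⟩
  exact (strictAntiOn_div_sqrt_add_sqrt hc).sum_comp (fun i ↦ adjacentPair i)
    monotone_adjacentPair hmaps (injective_adjacentPair hn).injOn hw hw' (hle.lt_of_ne hne)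
end

section
/- Let p ≥ 1, let γ : [0, s_f] → ℝᵖ be three times continuously differentiable with ‖γ′(s)‖ = 1 for all s, let w : [0, s_f] → ℝ be twice continuously differentiable with w(s) > 0 for all s, and let λ : [0, t_f] → [0, s_f] be differentiable with λ′(t) = √(w(λ(t))) for all t. Define q(t) = γ(λ(t)). Then q is three times differentiable and for all t: ‖q‴(t)‖ ≤ (3/2)·‖γ″(λ(t))‖·|w′(λ(t))|·√(w(λ(t))) + |w″(λ(t))|·√(w(λ(t))) + ‖γ‴(λ(t))‖·w(λ(t))^{3/2}. -/
/-!
Since `λ̇ = √(w ∘ λ)`, the chain rule gives `q̇ = √w • γ′`, and wherever `w > 0` the identity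
`d/dt √(w ∘ λ) = w′/2` turns this into `q̈ = w • γ″ + (w′/2) • γ′` and
`q⃛ = √w • (w • γ‴ + (3/2 · w′) • γ″ + (w″/2) • γ′)`, everything evaluated at `λ(t)`.
Positivity of `w` at `λ(t)` persists near `t`, so the formula for `q̈` holds on a neighbourhood
and may be differentiated. The bound is then the triangle inequality together with `‖γ′‖ = 1`.
-/

open Filter Topology

section Reparametrization

variable {E : Type*} [NormedAddCommGroup E] [NormedSpace ℝ E] {γ : ℝ → E} {w lam : ℝ → ℝ}
  {t : ℝ}

theorem hasDerivAt_sqrt_comp_of_hasDerivAt (hlam : HasDerivAt lam (√(w (lam t))) t)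
    (hw : DifferentiableAt ℝ w (lam t)) (hpos : 0 < w (lam t)) :
    HasDerivAt (fun s => √(w (lam s))) (deriv w (lam t) / 2) t := by
  have h := (Real.hasDerivAt_sqrt hpos.ne').comp t (hw.hasDerivAt.comp t hlam)
  refine h.congr_deriv ?_
  field_simp [(Real.sqrt_pos.mpr hpos).ne']

theorem deriv_comp_eq_sqrt_smul (hlam : ∀ t, HasDerivAt lam (√(w (lam t))) t)
    (hγ : Differentiable ℝ γ) :
    deriv (fun t => γ (lam t)) = fun t => √(w (lam t)) • deriv γ (lam t) :=
  funext fun t => ((hγ (lam t)).hasDerivAt.scomp t (hlam t)).deriv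

theorem hasDerivAt_deriv_comp (hlam : ∀ t, HasDerivAt lam (√(w (lam t))) t)
    (hγ : Differentiable ℝ γ) (hγ' : DifferentiableAt ℝ (deriv γ) (lam t))
    (hw : DifferentiableAt ℝ w (lam t)) (hpos : 0 < w (lam t)) :
    HasDerivAt (deriv fun t => γ (lam t))
      (w (lam t) • deriv (deriv γ) (lam t) + (deriv w (lam t) / 2) • deriv γ (lam t)) t := by
  rw [deriv_comp_eq_sqrt_smul hlam hγ]
  have h := (hasDerivAt_sqrt_comp_of_hasDerivAt (hlam t) hw hpos).smul
    (hγ'.hasDerivAt.scomp t (hlam t))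
  rwa [smul_smul, Real.mul_self_sqrt hpos.le] at h

theorem hasDerivAt_deriv_deriv_comp (hlam : ∀ t, HasDerivAt lam (√(w (lam t))) t)
    (hγ : Differentiable ℝ γ) (hγ' : Differentiable ℝ (deriv γ))
    (hγ'' : Differentiable ℝ (deriv (deriv γ))) (hw : Differentiable ℝ w)
    (hw' : Differentiable ℝ (deriv w)) (hpos : 0 < w (lam t)) :
    HasDerivAt (deriv (deriv fun t => γ (lam t)))
      (√(w (lam t)) • (w (lam t) • deriv (deriv (deriv γ)) (lam t)
        + (3 / 2 * deriv w (lam t)) • deriv (deriv γ) (lam t)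
        + (deriv (deriv w) (lam t) / 2) • deriv γ (lam t))) t := by
  have hlamc : Continuous lam := continuous_iff_continuousAt.mpr fun s => (hlam s).continuousAt
  have hnear : ∀ᶠ s in 𝓝 t, 0 < w (lam s) :=
    (hw.continuous.comp hlamc).continuousAt.eventually (eventually_gt_nhds hpos)
  have hsecond : deriv (deriv fun t => γ (lam t)) =ᶠ[𝓝 t] fun s =>
      w (lam s) • deriv (deriv γ) (lam s) + (deriv w (lam s) / 2) • deriv γ (lam s) := by
    filter_upwards [hnear] with s hs
    exact (hasDerivAt_deriv_comp hlam hγ (hγ' _) (hw _) hs).deriv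
  have h := (((hw _).hasDerivAt.comp t (hlam t)).smul ((hγ'' _).hasDerivAt.scomp t (hlam t))).add
    ((((hw' _).hasDerivAt.comp t (hlam t)).div_const 2).smul ((hγ' _).hasDerivAt.scomp t (hlam t)))
  convert h.congr_of_eventuallyEq hsecond using 1
  simp only [Function.comp_apply]
  module

end Reparametrization

theorem norm_sqrt_smul_jerk_le {E : Type*} [NormedAddCommGroup E] [NormedSpace ℝ E]
    {w a b : ℝ} {x y z : E} (hw : 0 ≤ w) (hz : ‖z‖ = 1) :
    ‖√w • (w • x + (3 / 2 * a) • y + (b / 2) • z)‖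
      ≤ 3 / 2 * ‖y‖ * |a| * √w + |b| * √w + ‖x‖ * w ^ ((3 : ℝ) / 2) := by
  have hw32 : w ^ ((3 : ℝ) / 2) = √w * w := by
    rw [Real.sqrt_eq_rpow, ← Real.rpow_add_one' hw (by norm_num)]
    norm_num
  have hinner : ‖w • x + (3 / 2 * a) • y + (b / 2) • z‖ ≤ w * ‖x‖ + 3 / 2 * |a| * ‖y‖ + |b| := by
    calc _ ≤ ‖w • x‖ + ‖(3 / 2 * a) • y‖ + ‖(b / 2) • z‖ := norm_add₃_le
      _ = w * ‖x‖ + 3 / 2 * |a| * ‖y‖ + |b| / 2 := by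
        simp only [norm_smul, Real.norm_eq_abs, abs_mul, abs_div, abs_of_nonneg hw, hz]
        norm_num
      _ ≤ _ := by linarith [abs_nonneg b]
  rw [norm_smul, Real.norm_of_nonneg (Real.sqrt_nonneg w), hw32]
  nlinarith [Real.sqrt_nonneg w]

theorem stmt_17_general (p : ℕ) (sf tf : ℝ)
    (γ : ℝ → EuclideanSpace ℝ (Fin p)) (w lam : ℝ → ℝ)
    (hγ : ContDiff ℝ 3 γ)
    (hγ1 : ∀ s ∈ Set.Icc (0 : ℝ) sf, ‖deriv γ s‖ = 1)
    (hw : ContDiff ℝ 2 w)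
    (hwpos : ∀ s ∈ Set.Icc (0 : ℝ) sf, 0 < w s)
    (hlamrange : ∀ t ∈ Set.Icc (0 : ℝ) tf, lam t ∈ Set.Icc (0 : ℝ) sf)
    (hlam : ∀ t, HasDerivAt lam (Real.sqrt (w (lam t))) t)
    (q : ℝ → EuclideanSpace ℝ (Fin p)) (hq : q = fun t => γ (lam t)) :
    ∀ t ∈ Set.Icc (0 : ℝ) tf,
      DifferentiableAt ℝ q t
      ∧ DifferentiableAt ℝ (deriv q) t
      ∧ DifferentiableAt ℝ (deriv (deriv q)) t
      ∧ ‖deriv (deriv (deriv q)) t‖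
          ≤ 3 / 2 * ‖deriv (deriv γ) (lam t)‖ * |deriv w (lam t)| * Real.sqrt (w (lam t))
            + |deriv (deriv w) (lam t)| * Real.sqrt (w (lam t))
            + ‖deriv (deriv (deriv γ)) (lam t)‖ * w (lam t) ^ ((3 : ℝ) / 2) := by
  intro t ht
  subst hq
  have hγ' : ContDiff ℝ 2 (deriv γ) := hγ.deriv'
  have hγd : Differentiable ℝ γ := hγ.differentiable (by norm_num)
  have hγ'd : Differentiable ℝ (deriv γ) := hγ'.differentiable (by norm_num)
  have hγ''d : Differentiable ℝ (deriv (deriv γ)) := hγ'.deriv'.differentiable one_ne_zero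
  have hwd : Differentiable ℝ w := hw.differentiable (by norm_num)
  have hw'd : Differentiable ℝ (deriv w) := hw.deriv'.differentiable one_ne_zero
  have hpos : 0 < w (lam t) := hwpos _ (hlamrange t ht)
  have hjerk := hasDerivAt_deriv_deriv_comp hlam hγd hγ'd hγ''d hwd hw'd hpos
  refine ⟨(hγd _).comp t (hlam t).differentiableAt,
    (hasDerivAt_deriv_comp hlam hγd (hγ'd _) (hwd _) hpos).differentiableAt,
    hjerk.differentiableAt, ?_⟩
  rw [hjerk.deriv]
  exact norm_sqrt_smul_jerk_le hpos.le (hγ1 _ (hlamrange t ht))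

/-- Jerk bound for the trajectory `q(t) = γ(λ(t))`: for an arc-length parameterized
`C³` path `γ` and a `C²` squared-speed profile `w`, the trajectory is three times
differentiable and
`‖q‴‖ ≤ (3/2)‖γ″(λ)‖·|w′(λ)|·√(w∘λ) + |w″(λ)|·√(w∘λ) + ‖γ‴(λ)‖·(w∘λ)^{3/2}`. -/
theorem stmt_17 (p : ℕ) (hp : 1 ≤ p) (sf tf : ℝ) (hsf : 0 ≤ sf) (htf : 0 ≤ tf)
    (γ : ℝ → EuclideanSpace ℝ (Fin p)) (w lam : ℝ → ℝ)
    (hγ : ContDiff ℝ 3 γ)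
    (hγ1 : ∀ s ∈ Set.Icc (0 : ℝ) sf, ‖deriv γ s‖ = 1)
    (hw : ContDiff ℝ 2 w)
    (hwpos : ∀ s ∈ Set.Icc (0 : ℝ) sf, 0 < w s)
    (hlamrange : ∀ t ∈ Set.Icc (0 : ℝ) tf, lam t ∈ Set.Icc (0 : ℝ) sf)
    (hlam : ∀ t, HasDerivAt lam (Real.sqrt (w (lam t))) t)
    (q : ℝ → EuclideanSpace ℝ (Fin p)) (hq : q = fun t => γ (lam t)) :
    ∀ t ∈ Set.Icc (0 : ℝ) tf,
      DifferentiableAt ℝ q t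
      ∧ DifferentiableAt ℝ (deriv q) t
      ∧ DifferentiableAt ℝ (deriv (deriv q)) t
      ∧ ‖deriv (deriv (deriv q)) t‖
          ≤ 3 / 2 * ‖deriv (deriv γ) (lam t)‖ * |deriv w (lam t)| * Real.sqrt (w (lam t))
            + |deriv (deriv w) (lam t)| * Real.sqrt (w (lam t))
            + ‖deriv (deriv (deriv γ)) (lam t)‖ * w (lam t) ^ ((3 : ℝ) / 2) :=
  stmt_17_general p sf tf γ w lam hγ hγ1 hw hwpos hlamrange hlam q hq
end

section
/- Let p ≥ 1, let γ : [0, s_f] → ℝᵖ be three times continuously differentiable with ‖γ′(s)‖ = 1 for all s, set k(s) = ‖γ″(s)‖ and k₂(s) = ‖γ‴(s)‖. Let A, J > 0 and μ⁺ : [0, s_f] → (0, ∞), and let w : [0, s_f] → ℝ be twice continuously differentiable with 0 < w(s) ≤ μ⁺(s), (1/2)|w′(s)| ≤ A, and (1/2)|w″(s)|·√(w(s)) ≤ J for all s. Let λ : [0, t_f] → [0, s_f] be differentiable with λ′(t) = √(w(λ(t))) and define q(t) = γ(λ(t)). Then for all t: ‖q′(t)‖ ≤ √(μ⁺(λ(t))),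 ‖q″(t)‖ ≤ A + k(λ(t))·μ⁺(λ(t)), and ‖q‴(t)‖ ≤ 3·k(λ(t))·A·√(μ⁺(λ(t))) + 2J + k₂(λ(t))·μ⁺(λ(t))^{3/2}. -/
/-!
With `λ' = √(w ∘ λ)` the chain rule turns `d/dt` of any `f ∘ λ` into `√w · f'` (at `λ`), and
`d/dt √(w ∘ λ) = w'/2`. Hence `q' = √w γ'`, `q'' = (w'/2) γ' + w γ''` and
`q''' = (w''√w/2) γ' + (3/2) w'√w γ'' + w√w γ'''`. The triangle inequality with `‖γ'‖ = 1`,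
`w ≤ μ⁺`, `|w'|/2 ≤ A` and `|w''|√w/2 ≤ J` then gives the three bounds.
-/

open Real

section Reparametrization

variable {E : Type*} [NormedAddCommGroup E] [NormedSpace ℝ E] {γ : ℝ → E} {w lam : ℝ → ℝ} {t : ℝ}

theorem hasDerivAt_sqrt_comp_of_hasDerivAt_eq_sqrt (hw : DifferentiableAt ℝ w (lam t))
    (hpos : 0 < w (lam t)) (hlam : HasDerivAt lam (√(w (lam t))) t) :
    HasDerivAt (fun t => √(w (lam t))) (deriv w (lam t) / 2) t := by
  refine ((hw.hasDerivAt.comp t hlam).sqrt hpos.ne').congr_deriv ?_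
  simp only [Function.comp_apply]
  field_simp [(sqrt_pos.mpr hpos).ne']

theorem deriv_comp_of_hasDerivAt_eq_sqrt (hγ : Differentiable ℝ γ)
    (hlam : ∀ t, HasDerivAt lam (√(w (lam t))) t) :
    deriv (fun t => γ (lam t)) = fun t => √(w (lam t)) • deriv γ (lam t) :=
  funext fun t => ((hγ (lam t)).hasDerivAt.scomp t (hlam t)).deriv

theorem hasDerivAt_deriv_comp_of_hasDerivAt_eq_sqrt (hγ : ContDiff ℝ 2 γ)
    (hw : Differentiable ℝ w) (hlam : ∀ t, HasDerivAt lam (√(w (lam t))) t)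
    (hpos : 0 < w (lam t)) :
    HasDerivAt (deriv fun t => γ (lam t))
      ((deriv w (lam t) / 2) • deriv γ (lam t) + w (lam t) • deriv (deriv γ) (lam t)) t := by
  rw [deriv_comp_of_hasDerivAt_eq_sqrt (hγ.differentiable (by norm_num)) hlam]
  have hγ' := (hγ.differentiable_deriv_two (lam t)).hasDerivAt.scomp t (hlam t)
  have hsqrt := hasDerivAt_sqrt_comp_of_hasDerivAt_eq_sqrt (hw _) hpos (hlam t)
  refine (hsqrt.smul hγ').congr_deriv ?_
  rw [smul_smul, mul_self_sqrt hpos.le, add_comm]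
  rfl

theorem hasDerivAt_deriv_deriv_comp_of_hasDerivAt_eq_sqrt (hγ : ContDiff ℝ 3 γ)
    (hw : ContDiff ℝ 2 w) (hlam : ∀ t, HasDerivAt lam (√(w (lam t))) t)
    (hpos : 0 < w (lam t)) :
    HasDerivAt (deriv (deriv fun t => γ (lam t)))
      ((deriv (deriv w) (lam t) * √(w (lam t)) / 2) • deriv γ (lam t)
        + (3 / 2 * deriv w (lam t) * √(w (lam t))) • deriv (deriv γ) (lam t)
        + (w (lam t) * √(w (lam t))) • deriv (deriv (deriv γ)) (lam t)) t := by
  have hwd : Differentiable ℝ w := hw.differentiable (by norm_num)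
  have hγ' : ContDiff ℝ 2 (deriv γ) := hγ.deriv'
  have hw' : Differentiable ℝ (deriv w) := hw.differentiable_deriv_two
  have hγ'' : Differentiable ℝ (deriv (deriv γ)) := hγ'.differentiable_deriv_two
  -- `w ∘ lam` stays positive near `t`, so the second-derivative formula holds on a neighbourhood.
  have hnear : ∀ᶠ s in nhds t, 0 < w (lam s) :=
    continuousAt_const.eventually_lt
      (hwd.continuous.continuousAt.comp (hlam t).continuousAt) hpos
  have hsecond : deriv (deriv fun t => γ (lam t)) =ᶠ[nhds t]
      fun s => (deriv w (lam s) / 2) • deriv γ (lam s) + w (lam s) • deriv (deriv γ) (lam s) :=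
    hnear.mono fun s hs =>
      (hasDerivAt_deriv_comp_of_hasDerivAt_eq_sqrt (hγ.of_le (by norm_num)) hwd hlam hs).deriv
  have hw'lam := ((hw' (lam t)).hasDerivAt.comp t (hlam t)).div_const 2
  have hwlam := (hwd (lam t)).hasDerivAt.comp t (hlam t)
  have hγ'lam := (hγ'.differentiable (by norm_num) (lam t)).hasDerivAt.scomp t (hlam t)
  have hγ''lam := (hγ'' (lam t)).hasDerivAt.scomp t (hlam t)
  refine HasDerivAt.congr_of_eventuallyEq ?_ hsecond
  refine ((hw'lam.smul hγ'lam).add (hwlam.smul hγ''lam)).congr_deriv ?_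
  simp only [Function.comp_apply, smul_smul]
  match_scalars <;> ring

end Reparametrization

section NormBounds

variable {E : Type*} [NormedAddCommGroup E] [NormedSpace ℝ E] {T N K : E} {a b w μ A J : ℝ}

theorem mul_sqrt_le_rpow_three_halves (hw : 0 ≤ w) (hwμ : w ≤ μ) :
    w * √w ≤ μ ^ ((3 : ℝ) / 2) := by
  calc w * √w = w ^ ((3 : ℝ) / 2) := by
        rw [sqrt_eq_rpow, ← rpow_one_add' hw (by norm_num)]; norm_num
    _ ≤ μ ^ ((3 : ℝ) / 2) := rpow_le_rpow hw hwμ (by norm_num)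

theorem norm_sqrt_smul_le (hT : ‖T‖ = 1) (hwμ : w ≤ μ) : ‖√w • T‖ ≤ √μ := by
  rw [norm_smul, hT, mul_one, norm_of_nonneg (sqrt_nonneg w)]
  exact sqrt_le_sqrt hwμ

theorem norm_acceleration_formula_le (hT : ‖T‖ = 1) (ha : 1 / 2 * |a| ≤ A) (hw : 0 ≤ w)
    (hwμ : w ≤ μ) : ‖(a / 2) • T + w • N‖ ≤ A + ‖N‖ * μ := by
  calc ‖(a / 2) • T + w • N‖ ≤ 1 / 2 * |a| + w * ‖N‖ := by
        refine (norm_add_le _ _).trans_eq ?_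
        rw [norm_smul, norm_smul, hT, norm_of_nonneg hw, norm_div, norm_two, norm_eq_abs]
        ring
    _ ≤ A + μ * ‖N‖ := by gcongr
    _ = A + ‖N‖ * μ := by ring

theorem norm_jerk_formula_le (hT : ‖T‖ = 1) (ha : 1 / 2 * |a| ≤ A)
    (hb : 1 / 2 * |b| * √w ≤ J) (hw : 0 ≤ w) (hwμ : w ≤ μ) :
    ‖(b * √w / 2) • T + (3 / 2 * a * √w) • N + (w * √w) • K‖
      ≤ 3 * ‖N‖ * A * √μ + 2 * J + ‖K‖ * μ ^ ((3 : ℝ) / 2) := by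
  have hJ : 0 ≤ J := le_trans (by positivity) hb
  have hsqrt : √w ≤ √μ := sqrt_le_sqrt hwμ
  calc ‖(b * √w / 2) • T + (3 / 2 * a * √w) • N + (w * √w) • K‖
      ≤ 1 / 2 * |b| * √w + 3 * (1 / 2 * |a|) * √w * ‖N‖ + w * √w * ‖K‖ := by
        refine norm_add₃_le.trans_eq ?_
        rw [norm_smul, norm_smul, norm_smul, hT, norm_mul, norm_mul, norm_div, norm_mul,
          norm_mul, norm_of_nonneg (sqrt_nonneg w), norm_of_nonneg hw, norm_eq_abs, norm_eq_abs]
        norm_num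
        ring
    _ ≤ J + 3 * A * √μ * ‖N‖ + μ ^ ((3 : ℝ) / 2) * ‖K‖ := by
        have hA : 0 ≤ A := le_trans (by positivity) ha
        gcongr
        exact mul_sqrt_le_rpow_three_halves hw hwμ
    _ ≤ 3 * ‖N‖ * A * √μ + 2 * J + ‖K‖ * μ ^ ((3 : ℝ) / 2) := by nlinarith

end NormBounds

theorem stmt_18_general (p : ℕ) (sf tf : ℝ)
    (γ : ℝ → EuclideanSpace ℝ (Fin p)) (w lam μplus : ℝ → ℝ) (A J : ℝ)
    (hγ : ContDiff ℝ 3 γ)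
    (hγ1 : ∀ s ∈ Set.Icc (0 : ℝ) sf, ‖deriv γ s‖ = 1)
    (hw : ContDiff ℝ 2 w)
    (hwpos : ∀ s ∈ Set.Icc (0 : ℝ) sf, 0 < w s)
    (hwub : ∀ s ∈ Set.Icc (0 : ℝ) sf, w s ≤ μplus s)
    (hwacc : ∀ s ∈ Set.Icc (0 : ℝ) sf, 1 / 2 * |deriv w s| ≤ A)
    (hwjerk : ∀ s ∈ Set.Icc (0 : ℝ) sf,
      1 / 2 * |deriv (deriv w) s| * Real.sqrt (w s) ≤ J)
    (hlamrange : ∀ t ∈ Set.Icc (0 : ℝ) tf, lam t ∈ Set.Icc (0 : ℝ) sf)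
    (hlam : ∀ t, HasDerivAt lam (Real.sqrt (w (lam t))) t)
    (q : ℝ → EuclideanSpace ℝ (Fin p)) (hq : q = fun t => γ (lam t)) :
    ∀ t ∈ Set.Icc (0 : ℝ) tf,
      ‖deriv q t‖ ≤ Real.sqrt (μplus (lam t))
      ∧ ‖deriv (deriv q) t‖ ≤ A + ‖deriv (deriv γ) (lam t)‖ * μplus (lam t)
      ∧ ‖deriv (deriv (deriv q)) t‖
          ≤ 3 * ‖deriv (deriv γ) (lam t)‖ * A * Real.sqrt (μplus (lam t))
            + 2 * J + ‖deriv (deriv (deriv γ)) (lam t)‖ * μplus (lam t) ^ ((3 : ℝ) / 2) := by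
  subst hq
  intro t ht
  have hs := hlamrange t ht
  have hpos := hwpos _ hs
  refine ⟨?_, ?_, ?_⟩
  · rw [deriv_comp_of_hasDerivAt_eq_sqrt (hγ.differentiable (by norm_num)) hlam]
    exact norm_sqrt_smul_le (hγ1 _ hs) (hwub _ hs)
  · rw [(hasDerivAt_deriv_comp_of_hasDerivAt_eq_sqrt (hγ.of_le (by norm_num))
      (hw.differentiable (by norm_num)) hlam hpos).deriv]
    exact norm_acceleration_formula_le (hγ1 _ hs) (hwacc _ hs) hpos.le (hwub _ hs)
  · rw [(hasDerivAt_deriv_deriv_comp_of_hasDerivAt_eq_sqrt hγ hw hlam hpos).deriv]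
    exact norm_jerk_formula_le (hγ1 _ hs) (hwacc _ hs) (hwjerk _ hs) hpos.le (hwub _ hs)

/-- Bounds on velocity, acceleration and jerk of the trajectory `q(t) = γ(λ(t))`
when the squared-speed profile `w` is feasible for the continuous smooth
minimum-time velocity planning problem with bounds `μ⁺`, `A`, `J`:
`‖q′‖ ≤ √μ⁺(λ)`, `‖q″‖ ≤ A + k(λ)·μ⁺(λ)` and
`‖q‴‖ ≤ 3k(λ)·A·√μ⁺(λ) + 2J + k₂(λ)·μ⁺(λ)^{3/2}`, where `k = ‖γ″‖`, `k₂ = ‖γ‴‖`. -/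
theorem stmt_18 (p : ℕ) (hp : 1 ≤ p) (sf tf : ℝ) (hsf : 0 ≤ sf) (htf : 0 ≤ tf)
    (γ : ℝ → EuclideanSpace ℝ (Fin p)) (w lam μplus : ℝ → ℝ) (A J : ℝ)
    (hA : 0 < A) (hJ : 0 < J)
    (hγ : ContDiff ℝ 3 γ)
    (hγ1 : ∀ s ∈ Set.Icc (0 : ℝ) sf, ‖deriv γ s‖ = 1)
    (hμpos : ∀ s ∈ Set.Icc (0 : ℝ) sf, 0 < μplus s)
    (hw : ContDiff ℝ 2 w)
    (hwpos : ∀ s ∈ Set.Icc (0 : ℝ) sf, 0 < w s)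
    (hwub : ∀ s ∈ Set.Icc (0 : ℝ) sf, w s ≤ μplus s)
    (hwacc : ∀ s ∈ Set.Icc (0 : ℝ) sf, 1 / 2 * |deriv w s| ≤ A)
    (hwjerk : ∀ s ∈ Set.Icc (0 : ℝ) sf,
      1 / 2 * |deriv (deriv w) s| * Real.sqrt (w s) ≤ J)
    (hlamrange : ∀ t ∈ Set.Icc (0 : ℝ) tf, lam t ∈ Set.Icc (0 : ℝ) sf)
    (hlam : ∀ t, HasDerivAt lam (Real.sqrt (w (lam t))) t)
    (q : ℝ → EuclideanSpace ℝ (Fin p)) (hq : q = fun t => γ (lam t)) :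
    ∀ t ∈ Set.Icc (0 : ℝ) tf,
      ‖deriv q t‖ ≤ Real.sqrt (μplus (lam t))
      ∧ ‖deriv (deriv q) t‖ ≤ A + ‖deriv (deriv γ) (lam t)‖ * μplus (lam t)
      ∧ ‖deriv (deriv (deriv q)) t‖
          ≤ 3 * ‖deriv (deriv γ) (lam t)‖ * A * Real.sqrt (μplus (lam t))
            + 2 * J + ‖deriv (deriv (deriv γ)) (lam t)‖ * μplus (lam t) ^ ((3 : ℝ) / 2) :=
  stmt_18_general p sf tf γ w lam μplus A J hγ hγ1 hw hwpos hwub hwacc hwjerk hlamrange hlam q hq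
end
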